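/- arXiv:1108.4500 — 6 statements merged into one kernel-verified Lean document; each statement's English description precedes it below -/
import Mathlib

section
/- Fix a positive integer k and finite sets A, B ⊂ ℕ (nonempty). Let m > k · max(A) and C = A + m·B (where m·B = {m·b : b ∈ B}). Then for all nonnegative integers s, d with s + d ≤ k and s + d ≥ 1, |sC - dC| = |sA - dA| · |sB - dB|. -/
/-!
Since `X ↦ sX - dX` commutes with sums of sets and with dilation, `sC - dC = (sA - dA) + m·(sB - dB)`.
If `A ⊆ [0, M]`, then `sA - dA ⊆ [-dM, sM]` has diameter at most `(s + d)M ≤ kM < m`, so two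
representations `x + m y = x' + m y'` force `m ∣ x' - x` with `|x' - x| < m`, hence `x = x'`, `y = y'`.
-/

open Finset Pointwise

/-- `itSum k A` is the k-fold sumset A + A + ⋯ + A (with `itSum 0 A = {0}`). -/
def itSum : ℕ → Finset ℤ → Finset ℤ
  | 0, _ => {0}
  | n+1, A => A + itSum n A

/-- `gDiff s d A = sA - dA`. -/
def gDiff (s d : ℕ) (A : Finset ℤ) : Finset ℤ := itSum s A - itSum d A

theorem itSum_eq_nsmul (n : ℕ) (A : Finset ℤ) : itSum n A = n • A := by
  induction n with
  | zero => rfl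
  | succ n ih => rw [itSum, ih, succ_nsmul']

theorem gDiff_add_image_mul (m : ℤ) (s d : ℕ) (A B : Finset ℤ) :
    gDiff s d (A + B.image (m * ·)) = gDiff s d A + (gDiff s d B).image (m * ·) := by
  have image_sub (X Y : Finset ℤ) : (X - Y).image (m * ·) = X.image (m * ·) - Y.image (m * ·) :=
    image_image₂_distrib fun a b => mul_sub m a b
  simp only [gDiff, itSum_eq_nsmul, nsmul_add, image_sub]
  rw [← AddMonoidHom.coe_mulLeft, image_nsmul, image_nsmul, add_sub_add_comm]

theorem itSum_subset_Icc {A : Finset ℤ} {lo hi : ℤ} (hA : A ⊆ Icc lo hi) (n : ℕ) :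
    itSum n A ⊆ Icc (n * lo) (n * hi) := by
  induction n with
  | zero => simp [itSum]
  | succ n ih =>
    intro x hx
    obtain ⟨a, ha, y, hy, rfl⟩ := mem_add.mp hx
    have ha := mem_Icc.mp (hA ha)
    have hy := mem_Icc.mp (ih hy)
    rw [mem_Icc]; push_cast; constructor <;> linarith

theorem gDiff_subset_Icc {A : Finset ℤ} {lo hi : ℤ} (hA : A ⊆ Icc lo hi) (s d : ℕ) :
    gDiff s d A ⊆ Icc (s * lo - d * hi) (s * hi - d * lo) := by
  intro x hx
  obtain ⟨u, hu, v, hv, rfl⟩ := mem_sub.mp hx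
  have hu := mem_Icc.mp (itSum_subset_Icc hA s hu)
  have hv := mem_Icc.mp (itSum_subset_Icc hA d hv)
  rw [mem_Icc]; constructor <;> linarith

theorem card_add_image_mul_of_abs_sub_lt {X Y : Finset ℤ} {m : ℤ}
    (hX : ∀ x ∈ X, ∀ x' ∈ X, |x - x'| < m) : #(X + Y.image (m * ·)) = #X * #Y := by
  obtain rfl | ⟨x₀, hx₀⟩ := X.eq_empty_or_nonempty
  · simp
  have hm : 0 < m := by simpa using hX x₀ hx₀ x₀ hx₀
  rw [card_add_iff.mpr, card_image_of_injective _ (mul_right_injective₀ hm.ne')]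
  rintro ⟨x, _⟩ hp ⟨x', _⟩ hp' (h : x + _ = x' + _)
  simp only [Set.mem_prod, mem_coe, mem_image] at hp hp'
  obtain ⟨hx, y, -, rfl⟩ := hp
  obtain ⟨hx', y', -, rfl⟩ := hp'
  have hxx' : x' - x = 0 :=
    Int.eq_zero_of_abs_lt_dvd ⟨y - y', by linarith⟩ (hX x' hx' x hx)
  simp only [Prod.mk.injEq]; constructor <;> linarith

theorem stmt_2_general (k : ℕ) (A B : Finset ℤ)
    (hA : A.Nonempty)
    (hApos : ∀ a ∈ A, 0 ≤ a)
    (m : ℤ) (hm : ∀ a ∈ A, (k : ℤ) * a < m)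
    (C : Finset ℤ) (hC : C = A + B.image (fun b => m * b)) :
    ∀ s d : ℕ, 1 ≤ s + d → s + d ≤ k →
      (gDiff s d C).card = (gDiff s d A).card * (gDiff s d B).card := by
  intro s d _ hsd
  set M := A.max' hA
  have hM : 0 ≤ M := hApos M (A.max'_mem hA)
  have hAM : A ⊆ Icc 0 M := fun a ha => mem_Icc.mpr ⟨hApos a ha, A.le_max' a ha⟩
  have hkM : (s + d : ℤ) * M ≤ k * M := by gcongr; exact_mod_cast hsd
  have hmM : k * M < m := hm M (A.max'_mem hA)
  subst hC
  rw [gDiff_add_image_mul]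
  refine card_add_image_mul_of_abs_sub_lt fun x hx x' hx' => ?_
  have hxI := mem_Icc.mp (gDiff_subset_Icc hAM s d hx)
  have hxI' := mem_Icc.mp (gDiff_subset_Icc hAM s d hx')
  rw [abs_sub_lt_iff]
  constructor <;> linarith

theorem stmt_2 (k : ℕ) (hk : 1 ≤ k) (A B : Finset ℤ)
    (hA : A.Nonempty) (hB : B.Nonempty)
    (hApos : ∀ a ∈ A, 0 ≤ a) (hBpos : ∀ b ∈ B, 0 ≤ b)
    (m : ℤ) (hm : ∀ a ∈ A, (k : ℤ) * a < m)
    (C : Finset ℤ) (hC : C = A + B.image (fun b => m * b)) :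
    ∀ s d : ℕ, 1 ≤ s + d → s + d ≤ k →
      (gDiff s d C).card = (gDiff s d A).card * (gDiff s d B).card :=
  stmt_2_general k A B hA hApos m hm C hC
end

section
/- Fix a positive integer k and let ℓ = 2k+1, r = 2k+2, L = [0,ℓ] \ ({2} ∪ [k+2, 2k]) and R = [0,r] \ ({3} ∪ [k+3, 2k+1]) as subsets of ℤ. Then for all positive integers x, y, the sumset xL + yR equals [0, xℓ + yr] \ ([xℓ+yr-k+1, xℓ+yr-1] ∪ {xℓ+yr-2k+1}). -/
/-!
Write `T N` for `[0, N] \ ([N - k + 1, N - 1] ∪ {N - 2k + 1})`. Both `L = T ℓ` and `R = T r`, and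
`T m + T n = T (m + n)` as soon as `m, n ≥ 2k + 1`: adding `0`, `1` or the top element of one summand
to the other produces everything except a short range just below the smaller top, which is filled
from the two low blocks `[0, m - k]` and `[0, n - k]`. So `xL = T (xℓ)`, `yR = T (yr)` and
`xL + yR = T (xℓ + yr)`.
-/

open Finset Pointwise

noncomputable def gappedIcc (k : ℕ) (N : ℤ) : Finset ℤ :=
  Icc 0 N \ (Icc (N - k + 1) (N - 1) ∪ {N - 2 * k + 1})

theorem mem_gappedIcc {k : ℕ} {N t : ℤ} :
    t ∈ gappedIcc k N ↔ 0 ≤ t ∧ t ≤ N ∧ ¬(N - k + 1 ≤ t ∧ t ≤ N - 1) ∧ t ≠ N - 2 * k + 1 := by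
  simp only [gappedIcc, mem_sdiff, mem_Icc, mem_union, mem_singleton]
  tauto

theorem gappedIcc_add_gappedIcc_of_le {k : ℕ} {m n : ℤ} (hm : 2 * k + 1 ≤ m) (hmn : m ≤ n) :
    gappedIcc k m + gappedIcc k n = gappedIcc k (m + n) := by
  ext s
  simp only [mem_add, mem_gappedIcc]
  constructor
  · rintro ⟨a, ha, b, hb, rfl⟩
    omega
  · intro hs
    by_cases htop : s = m + n
    · exact ⟨m, by omega, n, by omega, htop.symm⟩
    by_cases hlow : s ≤ n - k ∧ s ≠ n - 2 * k + 1
    · exact ⟨0, by omega, s, by omega, zero_add s⟩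
    by_cases hhole : s = n - 2 * k + 1
    · exact ⟨1, by omega, n - 2 * k, by omega, by omega⟩
    by_cases hshift : m ≤ s
    · exact ⟨m, by omega, s - m, by omega, by omega⟩
    -- Here `n - k < s < m`: write `s` as a sum from the blocks `[0, m - k]` and `[0, n - k]`,
    -- avoiding their holes.
    by_cases hclash : s = m + n - 3 * k + 1
    · exact ⟨m - 2 * k + 2, by omega, n - k - 1, by omega, by omega⟩
    · exact ⟨m - k, by omega, s - m + k, by omega, by omega⟩

theorem gappedIcc_add_gappedIcc {k : ℕ} {m n : ℤ} (hm : 2 * k + 1 ≤ m) (hn : 2 * k + 1 ≤ n) :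
    gappedIcc k m + gappedIcc k n = gappedIcc k (m + n) := by
  rcases le_total m n with hmn | hnm
  · exact gappedIcc_add_gappedIcc_of_le hm hmn
  · rw [add_comm, add_comm m n]
    exact gappedIcc_add_gappedIcc_of_le hn hnm

theorem itSum_one (A : Finset ℤ) : itSum 1 A = A := by
  rw [itSum, itSum, singleton_zero, add_zero]

theorem itSum_gappedIcc {k : ℕ} {m : ℤ} (hm : 2 * k + 1 ≤ m) {n : ℕ} (hn : 1 ≤ n) :
    itSum n (gappedIcc k m) = gappedIcc k (n * m) := by
  induction n, hn using Nat.le_induction with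
  | base => simp [itSum_one]
  | succ n hn ih =>
    have hnm : 2 * k + 1 ≤ (n : ℤ) * m := by
      nlinarith [show (1 : ℤ) ≤ n by exact_mod_cast hn]
    rw [itSum, ih, gappedIcc_add_gappedIcc hm hnm]
    congr 1
    push_cast
    ring

theorem stmt_3_general (k : ℕ)
    (L R : Finset ℤ)
    (hL : L = Finset.Icc 0 (2 * (k : ℤ) + 1) \ ({2} ∪ Finset.Icc ((k : ℤ) + 2) (2 * (k : ℤ))))
    (hR : R = Finset.Icc 0 (2 * (k : ℤ) + 2) \ ({3} ∪ Finset.Icc ((k : ℤ) + 3) (2 * (k : ℤ) + 1))) :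
    ∀ x y : ℕ, 1 ≤ x → 1 ≤ y →
      itSum x L + itSum y R =
        Finset.Icc 0 ((x : ℤ) * (2 * k + 1) + (y : ℤ) * (2 * k + 2)) \
          (Finset.Icc ((x : ℤ) * (2 * k + 1) + (y : ℤ) * (2 * k + 2) - k + 1)
              ((x : ℤ) * (2 * k + 1) + (y : ℤ) * (2 * k + 2) - 1) ∪
            {(x : ℤ) * (2 * k + 1) + (y : ℤ) * (2 * k + 2) - 2 * k + 1}) := by
  intro x y hx hy
  have hL' : L = gappedIcc k (2 * k + 1) := by
    ext t
    rw [hL, mem_gappedIcc]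
    simp only [mem_sdiff, mem_Icc, mem_union, mem_singleton]
    omega
  have hR' : R = gappedIcc k (2 * k + 2) := by
    ext t
    rw [hR, mem_gappedIcc]
    simp only [mem_sdiff, mem_Icc, mem_union, mem_singleton]
    omega
  have hxL : 2 * k + 1 ≤ (x : ℤ) * (2 * k + 1) := by nlinarith [show (1 : ℤ) ≤ x by exact_mod_cast hx]
  have hyR : 2 * k + 1 ≤ (y : ℤ) * (2 * k + 2) := by nlinarith [show (1 : ℤ) ≤ y by exact_mod_cast hy]
  rw [hL', hR', itSum_gappedIcc le_rfl hx, itSum_gappedIcc (by omega) hy,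
    gappedIcc_add_gappedIcc hxL hyR]
  rfl

theorem stmt_3 (k : ℕ) (hk : 1 ≤ k)
    (L R : Finset ℤ)
    (hL : L = Finset.Icc 0 (2 * (k : ℤ) + 1) \ ({2} ∪ Finset.Icc ((k : ℤ) + 2) (2 * (k : ℤ))))
    (hR : R = Finset.Icc 0 (2 * (k : ℤ) + 2) \ ({3} ∪ Finset.Icc ((k : ℤ) + 3) (2 * (k : ℤ) + 1))) :
    ∀ x y : ℕ, 1 ≤ x → 1 ≤ y →
      itSum x L + itSum y R =
        Finset.Icc 0 ((x : ℤ) * (2 * k + 1) + (y : ℤ) * (2 * k + 2)) \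
          (Finset.Icc ((x : ℤ) * (2 * k + 1) + (y : ℤ) * (2 * k + 2) - k + 1)
              ((x : ℤ) * (2 * k + 1) + (y : ℤ) * (2 * k + 2) - 1) ∪
            {(x : ℤ) * (2 * k + 1) + (y : ℤ) * (2 * k + 2) - 2 * k + 1}) :=
  stmt_3_general k L R hL hR
end

section
/- Let s₁, d₁, s₂, d₂ be nonnegative integers with s₁ + d₁ = s₂ + d₂ ≥ 2, {s₁,d₁} ≠ {s₂,d₂}, and s₁ ≥ 2. Then there exists a finite nonempty set A of nonnegative integers such that |s₁A - d₁A| = |s₂A - d₂A| + 1. -/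
open Finset Pointwise

noncomputable def fringeSet (L R : Finset ℤ) (T N : ℤ) : Finset ℤ :=
  L ∪ Icc (T + 1) (N - T - 1) ∪ R.image (N - ·)

lemma mem_fringeSet {L R : Finset ℤ} {T N x : ℤ} :
    x ∈ fringeSet L R T N ↔ x ∈ L ∨ (T + 1 ≤ x ∧ x ≤ N - T - 1) ∨ ∃ r ∈ R, N - r = x := by
  simp [fringeSet]

lemma fringeSet_zero {T : ℤ} (hT : 0 ≤ T) : fringeSet {0} {0} T 0 = {0} := by
  ext x; simp only [mem_fringeSet, mem_singleton]; constructor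
  · rintro (h | h | ⟨r, rfl, rfl⟩) <;> omega
  · exact .inl

lemma neg_fringeSet (L R : Finset ℤ) (T N : ℤ) :
    -fringeSet L R T N = fringeSet R L T N + {-N} := by
  ext x
  simp only [mem_neg, mem_add, mem_singleton, exists_eq_left, mem_fringeSet]
  constructor
  · rintro ⟨y, hy | hy | ⟨r, hr, rfl⟩, rfl⟩
    · exact ⟨N - y, .inr (.inr ⟨y, hy, rfl⟩), by ring⟩
    · exact ⟨N - y, .inr (.inl (by omega)), by ring⟩
    · exact ⟨r, .inl hr, by ring⟩
  · rintro ⟨y, hy | hy | ⟨l, hl, rfl⟩, rfl⟩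
    · exact ⟨N - y, .inr (.inr ⟨y, hy, rfl⟩), by ring⟩
    · exact ⟨N - y, .inr (.inl (by omega)), by ring⟩
    · exact ⟨l, .inl hl, by ring⟩

section FringeSet

variable {L R L' R' : Finset ℤ} {T N N' : ℤ}

lemma fringeSet_add (hT : 0 ≤ T) (hL : L ⊆ Icc 0 (N - T - 1)) (hR : R ⊆ Icc 0 (N - T - 1))
    (hL' : L' ⊆ Icc 0 (N' - T - 1)) (hR' : R' ⊆ Icc 0 (N' - T - 1))
    (hL₀ : 0 ∈ L) (hR₀ : 0 ∈ R) (hL₀' : 0 ∈ L') (hN : 3 * T + 2 ≤ N) (hN' : 3 * T + 2 ≤ N') :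
    fringeSet L R T N + fringeSet L' R' T N' = fringeSet (L + L') (R + R') T (N + N') := by
  ext x
  simp only [mem_add, mem_fringeSet]
  constructor
  · rintro ⟨a, ha | ha | ⟨r, hr, rfl⟩, b, hb | hb | ⟨r', hr', rfl⟩, rfl⟩
    · exact .inl ⟨a, ha, b, hb, rfl⟩
    · have := mem_Icc.1 (hL ha); omega
    · have := mem_Icc.1 (hL ha); have := mem_Icc.1 (hR' hr'); omega
    · have := mem_Icc.1 (hL' hb); omega
    · omega
    · have := mem_Icc.1 (hR' hr'); omega
    · have := mem_Icc.1 (hR hr); have := mem_Icc.1 (hL' hb); omega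
    · have := mem_Icc.1 (hR hr); omega
    · exact .inr (.inr ⟨r + r', ⟨r, hr, r', hr', rfl⟩, by ring⟩)
  · rintro (⟨a, ha, b, hb, rfl⟩ | hx | ⟨_, ⟨r, hr, r', hr', rfl⟩, rfl⟩)
    · exact ⟨a, .inl ha, b, .inl hb, rfl⟩
    · by_cases h₁ : x ≤ N' - T - 1
      · exact ⟨0, .inl hL₀, x, .inr (.inl (by omega)), by ring⟩
      by_cases h₂ : x ≤ N - T - 1
      · exact ⟨x, .inr (.inl (by omega)), 0, .inl hL₀', by ring⟩
      by_cases h₃ : x ≤ N + N' - 2 * T - 2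
      · refine ⟨max (T + 1) (x - (N' - T - 1)), .inr (.inl (by omega)),
          x - max (T + 1) (x - (N' - T - 1)), .inr (.inl (by omega)), by ring⟩
      · exact ⟨N - 0, .inr (.inr ⟨0, hR₀, rfl⟩), x - N, .inr (.inl (by omega)), by ring⟩
    · exact ⟨N - r, .inr (.inr ⟨r, hr, rfl⟩), N' - r', .inr (.inr ⟨r', hr', rfl⟩), by ring⟩

lemma card_fringeSet (hL : L ⊆ Icc 0 (N - T - 1)) (hR : R ⊆ Icc 0 (N - T - 1))
    (hN : 2 * T + 1 ≤ N) :
    (#(fringeSet L R T N) : ℤ) = #(L ∩ Icc 0 T) + (N - 2 * T - 1) + #(R ∩ Icc 0 T) := by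
  have hsplit : fringeSet L R T N =
      L ∩ Icc 0 T ∪ Icc (T + 1) (N - T - 1) ∪ (R ∩ Icc 0 T).image (N - ·) := by
    ext x
    simp only [mem_fringeSet, mem_union, mem_inter, mem_image, mem_Icc]
    constructor
    · rintro (hx | hx | ⟨r, hr, rfl⟩)
      · have := mem_Icc.1 (hL hx); by_cases x ≤ T <;> grind
      · exact .inl (.inr hx)
      · have := mem_Icc.1 (hR hr); by_cases r ≤ T <;> grind
    · rintro ((⟨hx, -⟩ | hx) | ⟨r, ⟨hr, -⟩, rfl⟩)
      · exact .inl hx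
      · exact .inr (.inl hx)
      · exact .inr (.inr ⟨r, hr, rfl⟩)
  have hdisj₁ : Disjoint (L ∩ Icc 0 T) (Icc (T + 1) (N - T - 1)) := by
    simp only [disjoint_left, mem_inter, mem_Icc]; omega
  have hdisj₂ : Disjoint (L ∩ Icc 0 T ∪ Icc (T + 1) (N - T - 1)) ((R ∩ Icc 0 T).image (N - ·)) := by
    simp only [disjoint_left, mem_union, mem_inter, mem_image, mem_Icc]
    rintro x (⟨-, hx⟩ | hx) ⟨r, ⟨-, hr⟩, rfl⟩ <;> omega
  rw [hsplit, card_union_of_disjoint hdisj₂, card_union_of_disjoint hdisj₁,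
    card_image_of_injective _ sub_right_injective, Int.card_Icc]
  push_cast
  omega

end FringeSet

lemma zero_mem_itSum {Q : Finset ℤ} (h0 : 0 ∈ Q) : ∀ j, (0 : ℤ) ∈ itSum j Q
  | 0 => mem_singleton_self 0
  | j + 1 => mem_add.2 ⟨0, h0, 0, zero_mem_itSum h0 j, zero_add 0⟩

lemma itSum_subset_Icc_s9 {Q : Finset ℤ} {T : ℤ} (hQ : Q ⊆ Icc 0 T) :
    ∀ j : ℕ, itSum j Q ⊆ Icc 0 (j * T)
  | 0 => by simp [itSum]
  | j + 1 => by
    intro x hx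
    obtain ⟨a, ha, b, hb, rfl⟩ := mem_add.1 hx
    have := mem_Icc.1 (hQ ha)
    have := mem_Icc.1 (itSum_subset_Icc_s9 hQ j hb)
    rw [mem_Icc]; push_cast; constructor <;> linarith

section Construction

variable {Q : Finset ℤ} {T n : ℤ}

lemma itSum_subset_Icc_sub (hT : 0 ≤ T) (hQ : Q ⊆ Icc 0 T) (hn : 2 * T + 1 ≤ n) {j k : ℕ}
    (hjk : j ≤ k) (hk : 0 < k) : itSum j Q ⊆ Icc 0 (k * n - T - 1) :=
  (itSum_subset_Icc_s9 hQ j).trans <| Icc_subset_Icc le_rfl <| by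
    have hjk : (j : ℤ) ≤ k := by exact_mod_cast hjk
    have hk : (1 : ℤ) ≤ k := by exact_mod_cast hk
    nlinarith [mul_le_mul_of_nonneg_right hk (by omega : (0 : ℤ) ≤ n - T),
      mul_le_mul_of_nonneg_right hjk hT]

lemma itSum_fringeSet (hT : 0 ≤ T) (hQ : Q ⊆ Icc 0 T) (h0 : 0 ∈ Q) (hn : 3 * T + 2 ≤ n) :
    ∀ s : ℕ, itSum s (fringeSet {0} Q T n) = fringeSet {0} (itSum s Q) T (s * n)
  | 0 => by simpa [itSum] using (fringeSet_zero hT).symm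
  | 1 => by simp [itSum, singleton_zero]
  | s + 2 => by
    have hsn : 3 * T + 2 ≤ (s + 1 : ℕ) * n := by push_cast; nlinarith
    have h0n : ({0} : Finset ℤ) ⊆ Icc 0 (n - T - 1) := by simp; omega
    have h0sn : ({0} : Finset ℤ) ⊆ Icc 0 ((s + 1 : ℕ) * n - T - 1) := by
      rw [singleton_subset_iff, mem_Icc]; omega
    rw [itSum, itSum_fringeSet hT hQ h0 hn (s + 1), fringeSet_add hT h0n
      (hQ.trans (Icc_subset_Icc le_rfl (by omega))) h0sn
      (itSum_subset_Icc_sub hT hQ (by omega) le_rfl s.succ_pos) (mem_singleton_self 0) h0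
      (mem_singleton_self 0) hn hsn]
    simp only [singleton_zero, add_zero, itSum]
    push_cast; ring_nf

lemma gDiff_fringeSet (hT : 0 ≤ T) (hQ : Q ⊆ Icc 0 T) (h0 : 0 ∈ Q) (hn : 3 * T + 2 ≤ n)
    (s d : ℕ) :
    gDiff s d (fringeSet {0} Q T n) =
      fringeSet (itSum d Q) (itSum s Q) T ((s + d : ℕ) * n) + {-(d * n)} := by
  rw [gDiff, sub_eq_add_neg, itSum_fringeSet hT hQ h0 hn, itSum_fringeSet hT hQ h0 hn,
    neg_fringeSet]
  rcases Nat.eq_zero_or_pos s with rfl | hs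
  · simp only [itSum, Nat.cast_zero, zero_mul, zero_add, fringeSet_zero hT]
    rw [singleton_zero, zero_add]
  rcases Nat.eq_zero_or_pos d with rfl | hd
  · simp only [itSum, Nat.cast_zero, zero_mul, add_zero, fringeSet_zero hT, neg_zero]
    rw [singleton_zero, add_zero, add_zero]
  have hsn : 3 * T + 2 ≤ s * n := by nlinarith
  have hdn : 3 * T + 2 ≤ d * n := by nlinarith
  rw [← add_assoc, fringeSet_add hT (by simp; omega)
    (itSum_subset_Icc_sub hT hQ (by omega) le_rfl hs)
    (itSum_subset_Icc_sub hT hQ (by omega) le_rfl hd) (by simp; omega) (mem_singleton_self 0)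
    (zero_mem_itSum h0 s) (zero_mem_itSum h0 d) hsn hdn]
  simp only [singleton_zero, zero_add, add_zero]
  push_cast; ring_nf

noncomputable def fringeCount (Q : Finset ℤ) (T : ℤ) (j : ℕ) : ℕ := #(itSum j Q ∩ Icc 0 T)

lemma card_gDiff_fringeSet (hT : 0 ≤ T) (hQ : Q ⊆ Icc 0 T) (h0 : 0 ∈ Q) (hn : 3 * T + 2 ≤ n)
    {s d : ℕ} (hsd : 0 < s + d) :
    (#(gDiff s d (fringeSet {0} Q T n)) : ℤ) =
      fringeCount Q T d + ((s + d) * n - 2 * T - 1) + fringeCount Q T s := by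
  have hsdn : 2 * T + 1 ≤ (s + d : ℕ) * n := by
    have : (1 : ℤ) ≤ (s + d : ℕ) := by exact_mod_cast hsd
    nlinarith
  rw [gDiff_fringeSet hT hQ h0 hn, card_add_singleton,
    card_fringeSet (itSum_subset_Icc_sub hT hQ (by omega) (by omega) hsd)
      (itSum_subset_Icc_sub hT hQ (by omega) (by omega) hsd) hsdn, fringeCount, fringeCount]
  push_cast; ring

end Construction

lemma itSum_pair : ∀ j : ℕ, itSum j {0, 1} = Icc (0 : ℤ) j
  | 0 => by simp [itSum]
  | j + 1 => by
    ext v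
    simp only [itSum, itSum_pair j, mem_add, mem_insert, mem_singleton, mem_Icc]
    push_cast
    constructor
    · rintro ⟨q, rfl | rfl, w, hw, rfl⟩ <;> omega
    · intro hv
      by_cases hvj : v ≤ j
      · exact ⟨0, .inl rfl, v, by omega, zero_add v⟩
      · exact ⟨1, .inr rfl, v - 1, by omega, by ring⟩

lemma fringeCount_pair (t j : ℕ) : fringeCount {0, 1} t j = min j t + 1 := by
  have : Icc (0 : ℤ) j ∩ Icc 0 t = Icc 0 ((min j t : ℕ) : ℤ) := by
    ext; simp only [mem_inter, mem_Icc]; omega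
  rw [fringeCount, itSum_pair, this, Int.card_Icc]
  omega

lemma exists_fringeCount_balanced {s₁ d₁ s₂ d₂ : ℕ} (hsum : s₁ + d₁ = s₂ + d₂)
    (hlt : min s₂ d₂ < min s₁ d₁) :
    ∃ (Q : Finset ℤ) (T : ℤ), 0 ≤ T ∧ Q ⊆ Icc 0 T ∧ 0 ∈ Q ∧
      fringeCount Q T s₁ + fringeCount Q T d₁ = fringeCount Q T s₂ + fringeCount Q T d₂ + 1 := by
  refine ⟨{0, 1}, (min s₂ d₂ + 1 : ℕ), by omega, ?_, by simp, ?_⟩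
  · simp [insert_subset_iff]; omega
  · simp only [fringeCount_pair]
    omega

def stairCount (y j : ℕ) : ℕ := ∑ i ∈ range (j + 1), (min i y + 1)

lemma stairCount_succ (y j : ℕ) : stairCount y (j + 1) = stairCount y j + (min (j + 1) y + 1) :=
  sum_range_succ _ _

lemma stairCount_add {y j : ℕ} (h : y ≤ j + 1) :
    ∀ k, stairCount y (j + k) = stairCount y j + k * (y + 1)
  | 0 => by simp
  | k + 1 => by
    rw [← add_assoc, stairCount_succ, stairCount_add h k, min_eq_right (by omega)]
    ring

lemma stairCount_add_stairCount_min_max (y a b : ℕ) :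
    stairCount y a + stairCount y b = stairCount y (min a b) + stairCount y (max a b) := by
  rcases le_total a b with h | h
  · rw [min_eq_left h, max_eq_right h]
  · rw [min_eq_right h, max_eq_left h, add_comm]

lemma stairCount_exchange {a b c d : ℕ} (hsum : a + b = c + d) (hlt : min a b < min c d) :
    stairCount (min a b + 2) a + stairCount (min a b + 2) b =
      stairCount (min a b + 2) c + stairCount (min a b + 2) d + 1 := by
  obtain ⟨m, hm⟩ : ∃ m, min a b = m := ⟨_, rfl⟩
  obtain ⟨δ, hδ⟩ : ∃ δ, min c d = m + 1 + δ := ⟨min c d - (m + 1), by omega⟩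
  have hmax : max a b = max c d + (δ + 1) := by omega
  have h₁ : stairCount (m + 2) (m + 1) = stairCount (m + 2) m + (m + 2) := by
    rw [stairCount_succ, min_eq_left (by omega)]
  have h₂ := stairCount_add (y := m + 2) (j := m + 1) (by omega) δ
  have h₃ := stairCount_add (y := m + 2) (j := max c d) (by omega) (δ + 1)
  rw [hm, stairCount_add_stairCount_min_max, stairCount_add_stairCount_min_max _ c, hm, hδ, hmax,
    h₂, h₃, h₁]
  ring

section Triple

variable {x : ℕ}

lemma mem_itSum_triple (hx : 0 < x) {j : ℕ} {v : ℤ} :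
    v ∈ itSum j {0, 1, (x : ℤ)} ↔
      ∃ i ≤ j, x * i ≤ v ∧ v ≤ x * i + min ((j : ℤ) - i) (x - 1) := by
  induction j generalizing v with
  | zero =>
    simp only [itSum, mem_singleton, nonpos_iff_eq_zero, exists_eq_left]
    omega
  | succ j ih =>
    simp only [itSum, mem_add, mem_insert, mem_singleton, ih]
    push_cast
    constructor
    · rintro ⟨q, hq, w, ⟨i, hi, hw⟩, rfl⟩
      have e : (x : ℤ) * (i + 1 : ℕ) = x * i + x := by push_cast; ring
      rcases hq with rfl | rfl | rfl
      · exact ⟨i, by omega, by omega⟩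
      · by_cases hc : 1 + w ≤ x * i + min ((j : ℤ) + 1 - i) (x - 1)
        · exact ⟨i, by omega, by omega⟩
        · exact ⟨i + 1, by omega, by omega⟩
      · exact ⟨i + 1, by omega, by omega⟩
    · rintro ⟨i, hi, hv⟩
      rcases hi.eq_or_lt with rfl | hi
      · have e : (x : ℤ) * (j + 1 : ℕ) = x * j + x := by push_cast; ring
        exact ⟨x, by simp, x * j, ⟨j, le_rfl, by omega⟩, by omega⟩
      by_cases hc : v ≤ x * i + min ((j : ℤ) - i) (x - 1)
      · exact ⟨0, by simp, v, ⟨i, by omega, by omega⟩, by ring⟩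
      · exact ⟨1, by simp, v - 1, ⟨i, by omega, by omega⟩, by ring⟩

lemma card_itSum_triple (hx : 0 < x) (j : ℕ) :
    #(itSum j {0, 1, (x : ℤ)}) = stairCount (x - 1) j := by
  have hblocks : itSum j {0, 1, (x : ℤ)} =
      (range (j + 1)).biUnion fun i => Icc (x * i : ℤ) (x * i + min ((j : ℤ) - i) (x - 1)) := by
    ext v
    simp only [mem_itSum_triple hx, mem_biUnion, mem_range, mem_Icc, Nat.lt_succ_iff]
  have hdisj : (range (j + 1) : Set ℕ).PairwiseDisjoint
      fun i => Icc (x * i : ℤ) (x * i + min ((j : ℤ) - i) (x - 1)) := by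
    have hstep {i k : ℕ} (h : i < k) : (x : ℤ) * i + x ≤ x * k := by
      have : (i : ℤ) + 1 ≤ k := by exact_mod_cast h
      nlinarith
    intro i _ k _ hik
    simp only [Function.onFun, disjoint_left, mem_Icc]
    rcases hik.lt_or_gt with h | h <;> have := hstep h <;> omega
  rw [hblocks, card_biUnion hdisj, stairCount, ← sum_range_reflect]
  refine sum_congr rfl fun i hi => ?_
  rw [mem_range] at hi
  rw [Int.card_Icc]
  omega

end Triple

lemma fringeCount_triple {x J j : ℕ} (hx : 0 < x) (hj : j ≤ J) :
    fringeCount {0, 1, (x : ℤ)} (J * x) j = stairCount (x - 1) j := by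
  have hQ : ({0, 1, (x : ℤ)} : Finset ℤ) ⊆ Icc 0 x := by
    simp [insert_subset_iff]; omega
  have hjJ : (j : ℤ) * x ≤ J * x := by gcongr
  rw [fringeCount, inter_eq_left.2 ((itSum_subset_Icc_s9 hQ j).trans (Icc_subset_Icc le_rfl hjJ)),
    card_itSum_triple hx]

lemma exists_fringeCount_unbalanced {s₁ d₁ s₂ d₂ : ℕ} (hsum : s₁ + d₁ = s₂ + d₂)
    (hlt : min s₁ d₁ < min s₂ d₂) :
    ∃ (Q : Finset ℤ) (T : ℤ), 0 ≤ T ∧ Q ⊆ Icc 0 T ∧ 0 ∈ Q ∧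
      fringeCount Q T s₁ + fringeCount Q T d₁ = fringeCount Q T s₂ + fringeCount Q T d₂ + 1 := by
  set x := min s₁ d₁ + 3
  have hx : 0 < x := by omega
  have hJ : 1 ≤ s₁ + d₁ := by omega
  refine ⟨{0, 1, (x : ℤ)}, ((s₁ + d₁ : ℕ) : ℤ) * x, by positivity, ?_, by simp, ?_⟩
  · have : (x : ℤ) ≤ (s₁ + d₁ : ℕ) * x :=
      le_mul_of_one_le_left (by positivity) (by exact_mod_cast hJ)
    simp only [insert_subset_iff, singleton_subset_iff, mem_Icc]; omega
  · rw [fringeCount_triple hx le_self_add, fringeCount_triple hx le_add_self,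
      fringeCount_triple hx (hsum ▸ le_self_add), fringeCount_triple hx (hsum ▸ le_add_self)]
    exact stairCount_exchange hsum hlt

theorem stmt_9_general (s₁ d₁ s₂ d₂ : ℕ)
    (hsum : s₁ + d₁ = s₂ + d₂)
    (hne : ¬ ((s₁ = s₂ ∧ d₁ = d₂) ∨ (s₁ = d₂ ∧ d₁ = s₂))) :
    ∃ A : Finset ℤ, A.Nonempty ∧ (∀ a ∈ A, 0 ≤ a) ∧
      (gDiff s₁ d₁ A).card = (gDiff s₂ d₂ A).card + 1 := by
  obtain ⟨Q, T, hT, hQ, h0, hcount⟩ := (lt_or_gt_of_ne (show min s₁ d₁ ≠ min s₂ d₂ by omega)).elim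
    (exists_fringeCount_unbalanced hsum) (exists_fringeCount_balanced hsum)
  refine ⟨fringeSet {0} Q T (3 * T + 2), ⟨0, by simp [mem_fringeSet]⟩, fun a ha => ?_, ?_⟩
  · rcases mem_fringeSet.1 ha with ha | ha | ⟨q, hq, rfl⟩
    · exact (mem_singleton.1 ha).ge
    · omega
    · have := mem_Icc.1 (hQ hq); omega
  · have h₁ := card_gDiff_fringeSet hT hQ h0 le_rfl (s := s₁) (d := d₁) (by omega)
    have h₂ := card_gDiff_fringeSet hT hQ h0 le_rfl (s := s₂) (d := d₂) (by omega)
    have hsum' : (s₁ : ℤ) + d₁ = s₂ + d₂ := by exact_mod_cast hsum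
    zify
    rw [h₁, h₂, hsum']
    omega

theorem stmt_9 (s₁ d₁ s₂ d₂ : ℕ)
    (hsum : s₁ + d₁ = s₂ + d₂) (h2 : 2 ≤ s₁ + d₁) (hs₁ : 2 ≤ s₁)
    (hne : ¬ ((s₁ = s₂ ∧ d₁ = d₂) ∨ (s₁ = d₂ ∧ d₁ = s₂))) :
    ∃ A : Finset ℤ, A.Nonempty ∧ (∀ a ∈ A, 0 ≤ a) ∧
      (gDiff s₁ d₁ A).card = (gDiff s₂ d₂ A).card + 1 :=
  stmt_9_general s₁ d₁ s₂ d₂ hsum hne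
end

section
/- Let A ⊂ ℤ be a finite set and suppose A = L ∪ [u, v] ∪ (n - R) where L ⊆ [0, u-1], R ⊆ [0, n-v-1], 0 ∈ L, 0 ∈ R, and v - u + 1 ≥ max(u, n - v). Then for every k ≥ 1, kA contains the interval [u, (k-1)n + v]. -/
open Finset Pointwise

theorem stmt_12 (L R : Finset ℤ) (u v n : ℤ) (A : Finset ℤ)
    (hA : A = L ∪ Finset.Icc u v ∪ R.image (fun r => n - r))
    (hL : L ⊆ Finset.Icc 0 (u - 1)) (hR : R ⊆ Finset.Icc 0 (n - v - 1))
    (h0L : (0 : ℤ) ∈ L) (h0R : (0 : ℤ) ∈ R)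
    (hlong : v - u + 1 ≥ max u (n - v)) :
    ∀ k : ℕ, 1 ≤ k → Finset.Icc u (((k : ℤ) - 1) * n + v) ⊆ itSum k A := by
  have hIccA : Finset.Icc u v ⊆ A := by
    rw [hA]; intro x hx; exact mem_union_left _ (mem_union_right _ hx)
  have h0A : (0 : ℤ) ∈ A := by
    rw [hA]; exact mem_union_left _ (mem_union_left _ h0L)
  have hnA : n ∈ A := by
    rw [hA]; exact mem_union_right _ (mem_image.mpr ⟨0, h0R, by ring⟩)
  have hu1 : 1 ≤ u := by
    have := hL h0L; rw [Finset.mem_Icc] at this; omega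
  have hnv : v + 1 ≤ n := by
    have := hR h0R; rw [Finset.mem_Icc] at this; omega
  have h1 : u ≤ v - u + 1 := le_trans (le_max_left _ _) hlong
  have h2 : n - v ≤ v - u + 1 := le_trans (le_max_right _ _) hlong
  intro k hk
  induction k with
  | zero => omega
  | succ k ih =>
    rcases Nat.eq_zero_or_pos k with rfl | hk1
    · intro x hx
      rw [Finset.mem_Icc] at hx
      have hx2 : x ≤ v := by push_cast at hx; linarith [hx.2]
      show x ∈ A + itSum 0 A
      have hxe : x = x + 0 := by ring
      rw [hxe]
      exact Finset.add_mem_add (hIccA (Finset.mem_Icc.mpr ⟨hx.1, hx2⟩))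
        (by simp [itSum])
    · have IH := ih hk1
      intro x hx
      rw [Finset.mem_Icc] at hx
      have hx1 : u ≤ x := hx.1
      have hx2 : x ≤ (k : ℤ) * n + v := by push_cast at hx; linarith [hx.2]
      have hkn : (0:ℤ) ≤ ((k:ℤ)-1) * n := by
        have hk' : (1:ℤ) ≤ (k:ℤ) := by exact_mod_cast hk1
        nlinarith
      show x ∈ A + itSum k A
      by_cases hc1 : x ≤ ((k:ℤ)-1)*n + v
      · have hxe : x = 0 + x := by ring
        rw [hxe]
        exact Finset.add_mem_add h0A (IH (Finset.mem_Icc.mpr ⟨hx1, hc1⟩))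
      · push_neg at hc1
        by_cases hc2 : n + u ≤ x
        · have hxe : x = n + (x - n) := by ring
          rw [hxe]
          refine Finset.add_mem_add hnA (IH (Finset.mem_Icc.mpr ⟨by linarith, by linarith⟩))
        · push_neg at hc2
          set X := ((k:ℤ)-1)*n + v with hX
          set a := max u (x - X) with ha
          have hau : u ≤ a := le_max_left _ _
          have hax : x - X ≤ a := le_max_right _ _
          have hch : a = u ∨ a = x - X := max_choice _ _
          have hav : a ≤ v := by rcases hch with h | h <;> simp [h, hX] at * <;> linarith
          have hyu : u ≤ x - a := by rcases hch with h | h <;> simp [h, hX] at * <;> linarith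
          have hyX : x - a ≤ X := by linarith
          have hxe : x = a + (x - a) := by ring
          rw [hxe]
          exact Finset.add_mem_add (hIccA (Finset.mem_Icc.mpr ⟨hau, hav⟩))
            (IH (Finset.mem_Icc.mpr ⟨hyu, hyX⟩))
end

section
/- Let X ⊆ [0, n] be a set of integers with 0, n ∈ X, and suppose X contains an interval [u, v] with v - u + 1 ≥ u and v - u + 1 ≥ n - v. Then X + X ⊇ [u, n + v]. -/
/-!
`X + X` contains the three intervals `0 + [u, v]`, `[u, v] + [u, v] = [2u, 2v]` and
`n + [u, v]`; the two length conditions on `[u, v]` are exactly what makes consecutive ones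
overlap, so together they cover `[u, n + v]`.
-/

open Finset Pointwise

namespace Finset

variable {α : Type*} [AddCommGroup α] [LinearOrder α] [IsOrderedAddMonoid α]
  [LocallyFiniteOrder α]

theorem singleton_add_Icc (a b c : α) : {a} + Icc b c = Icc (a + b) (a + c) := by
  rw [singleton_add, vadd_finset_def, ← image_add_left_Icc]
  rfl

theorem Icc_add_Icc_eq {a b c d : α} (hab : a ≤ b) (hcd : c ≤ d) :
    Icc a b + Icc c d = Icc (a + c) (b + d) := by
  refine (Icc_add_Icc_subset a b c d).antisymm fun x hx ↦ ?_
  rw [mem_Icc] at hx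
  -- split `x` as `y + (x - y)` with `y` as small as `x - y ≤ d` allows
  refine mem_add.2 ⟨max a (x - d), ?_, x - max a (x - d), ?_, add_sub_cancel _ _⟩
  · exact mem_Icc.2 ⟨le_max_left _ _, max_le hab (sub_le_iff_le_add.2 hx.2)⟩
  · refine mem_Icc.2 ⟨le_sub_comm.1 (max_le ?_ ?_), sub_le_comm.1 (le_max_right _ _)⟩
    · exact le_sub_iff_add_le.2 (add_comm a c ▸ hx.1)
    · exact sub_le_sub_left hcd x

end Finset

theorem stmt_13_general (n u v : ℤ) (X : Finset ℤ)
    (h0 : (0 : ℤ) ∈ X) (hn : n ∈ X)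
    (hIcc : Finset.Icc u v ⊆ X)
    (h1 : v - u + 1 ≥ u) (h2 : v - u + 1 ≥ n - v) :
    Finset.Icc u (n + v) ⊆ X + X := by
  obtain hvu | huv := lt_or_ge v u
  · rw [Icc_eq_empty_of_lt (by omega)]
    exact empty_subset _
  have hlow : Icc u v ⊆ X + X := by
    simpa [singleton_add_Icc] using add_subset_add (singleton_subset_iff.2 h0) hIcc
  have hmid : Icc (u + u) (v + v) ⊆ X + X :=
    Icc_add_Icc_eq huv huv ▸ add_subset_add hIcc hIcc
  have hhigh : Icc (n + u) (n + v) ⊆ X + X :=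
    singleton_add_Icc n u v ▸ add_subset_add (singleton_subset_iff.2 hn) hIcc
  intro x hx
  rw [mem_Icc] at hx
  obtain hxv | hxv | hxv : x ≤ v ∨ v < x ∧ x ≤ v + v ∨ v + v < x := by omega
  · exact hlow (mem_Icc.2 ⟨hx.1, hxv⟩)
  · exact hmid (mem_Icc.2 ⟨by omega, hxv.2⟩)
  · exact hhigh (mem_Icc.2 ⟨by omega, hx.2⟩)

theorem stmt_13 (n u v : ℤ) (X : Finset ℤ)
    (hX : X ⊆ Finset.Icc 0 n) (h0 : (0 : ℤ) ∈ X) (hn : n ∈ X)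
    (hIcc : Finset.Icc u v ⊆ X)
    (h1 : v - u + 1 ≥ u) (h2 : v - u + 1 ≥ n - v) :
    Finset.Icc u (n + v) ⊆ X + X :=
  stmt_13_general n u v X h0 hn hIcc h1 h2
end

section
/- Let A ⊂ [0, n] be a finite set of integers with 0, n ∈ A and gcd(A) = 1. Then for all k ≥ n, kA ∩ [0, a₁·n] = (nA) ∩ [0, a₁·n], where a₁ = min(A \ {0}); that is, the left fringe of kA stabilizes by k = n = max(A). -/
open Finset Pointwise

lemma itSum_mono {A : Finset ℤ} (h0 : (0 : ℤ) ∈ A) :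
    ∀ {m k : ℕ}, m ≤ k → itSum m A ⊆ itSum k A := by
  intro m k h
  induction h with
  | refl => exact Finset.Subset.refl _
  | step h ih =>
    refine ih.trans ?_
    intro x hx
    have : (0 : ℤ) + x ∈ A + itSum _ A := Finset.add_mem_add h0 hx
    simpa [itSum] using this

lemma itSum_decomp {A : Finset ℤ} {a₁ : ℤ}
    (ha₁ : ∀ x ∈ A, x ≠ 0 → a₁ ≤ x) :
    ∀ k : ℕ, ∀ x ∈ itSum k A, ∃ m ≤ k, x ∈ itSum m A ∧ a₁ * m ≤ x := by
  intro k
  induction k with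
  | zero =>
    intro x hx
    simp only [itSum, Finset.mem_singleton] at hx
    exact ⟨0, Nat.le_refl 0, by simp [itSum, hx], by simp [hx]⟩
  | succ k ih =>
    intro x hx
    rw [itSum, Finset.mem_add] at hx
    obtain ⟨a, ha, y, hy, rfl⟩ := hx
    obtain ⟨m, hmk, hym, hmy⟩ := ih y hy
    by_cases h : a = 0
    · exact ⟨m, hmk.trans (Nat.le_succ k), by simpa [h] using hym, by
        simpa [h] using hmy⟩
    · refine ⟨m + 1, Nat.succ_le_succ hmk, ?_, ?_⟩
      · have : a + y ∈ A + itSum m A := Finset.add_mem_add ha hym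
        simpa [itSum] using this
      · have := ha₁ a ha h
        push_cast
        linarith

theorem stmt_18 (n : ℕ) (hn : 0 < n) (A : Finset ℤ)
    (hA : A ⊆ Finset.Icc 0 (n : ℤ)) (h0 : (0 : ℤ) ∈ A) (hnA : (n : ℤ) ∈ A)
    (hgcd : A.gcd id = 1)
    (a₁ : ℤ) (ha₁ : IsLeast {x : ℤ | x ∈ A ∧ x ≠ 0} a₁) :
    ∀ k : ℕ, n ≤ k →
      itSum k A ∩ Finset.Icc 0 (a₁ * n) = itSum n A ∩ Finset.Icc 0 (a₁ * n) := by
  intro k hk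
  obtain ⟨⟨ha₁A, ha₁0⟩, hlb⟩ := ha₁
  have ha₁pos : 0 < a₁ := by
    have := (Finset.mem_Icc.mp (hA ha₁A)).1
    omega
  apply Finset.Subset.antisymm
  · intro x hx
    rw [Finset.mem_inter] at hx ⊢
    obtain ⟨hxk, hxI⟩ := hx
    refine ⟨?_, hxI⟩
    obtain ⟨m, hmk, hxm, hmx⟩ := itSum_decomp (fun y hy hy0 => hlb ⟨hy, hy0⟩) k x hxk
    have hxle : x ≤ a₁ * n := (Finset.mem_Icc.mp hxI).2
    have hmn : (m : ℤ) ≤ n := by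
      by_contra h
      push_neg at h
      have : a₁ * n < a₁ * m := by
        exact mul_lt_mul_of_pos_left h ha₁pos
      linarith
    exact itSum_mono h0 (by exact_mod_cast hmn) hxm
  · exact Finset.inter_subset_inter_right (itSum_mono h0 hk) |>.trans (le_refl _)
end
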